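/- Let $A$ be a complex unital Banach algebra, $L \in A$, $T > 0$, and $R > \|L\|$. Then $\int_0^T \exp(tL)\,dt = \frac{1}{2\pi i}\oint_{|z|=R} e^{zT}\,\frac{1 - e^{-zT}}{z}\,(z\cdot 1 - L)^{-1}\,dz$, where the integral on the right is the counterclockwise circle integral over the circle of radius $R$ centered at $0$ (note every such $z$ is nonzero and $z\cdot 1 - L$ is invertible). -/

import Mathlib

open scoped Real Interval
open MeasureTheory Metric Complex Set

/-! Both sides are power series in `L`. Integrating the exponential series termwise gives
`∫₀ᵀ e^{tL} dt = ∑ Tⁿ⁺¹/(n+1)! Lⁿ`. On the circle `|z| = R > ‖L‖` the resolvent is the Neumann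
series `∑ z⁻⁽ⁿ⁺¹⁾ Lⁿ`, uniformly convergent, so the contour integral of `f(z) (z - L)⁻¹` with
`f(z) = (e^{Tz} - 1)/z` is `∑ (∮ z⁻⁽ⁿ⁺¹⁾ f(z) dz) Lⁿ`, and Cauchy's formula for the derivatives of
the entire function `e^{Tz} - 1` at `0` turns each coefficient into `2πi Tⁿ⁺¹/(n+1)!`. -/

theorem intervalIntegral.hasSum_integral_of_norm_le {ι E : Type*} [Countable ι]
    [NormedAddCommGroup E] [NormedSpace ℝ E] {μ : Measure ℝ} [IsLocallyFiniteMeasure μ]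
    {a b : ℝ} {F : ι → ℝ → E} {f : ℝ → E} (bound : ι → ℝ)
    (hF : ∀ n, IntervalIntegrable (F n) μ a b)
    (h_bound : ∀ n, ∀ t ∈ Ι a b, ‖F n t‖ ≤ bound n) (bound_summable : Summable bound)
    (h_lim : ∀ t ∈ Ι a b, HasSum (fun n => F n t) (f t)) :
    HasSum (fun n => ∫ t in a..b, F n t ∂μ) (∫ t in a..b, f t ∂μ) :=
  intervalIntegral.hasSum_integral_of_dominated_convergence (fun n _ => bound n)
    (fun n => (hF n).def'.aestronglyMeasurable) (fun n => .of_forall (h_bound n))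
    (.of_forall fun _ _ => bound_summable) intervalIntegrable_const (.of_forall h_lim)

theorem circleIntegral.hasSum_of_norm_le {ι E : Type*} [Countable ι]
    [NormedAddCommGroup E] [NormedSpace ℂ E] {c : ℂ} {R : ℝ}
    {F : ι → ℂ → E} {f : ℂ → E} (bound : ι → ℝ) (hF : ∀ n, CircleIntegrable (F n) c R)
    (h_bound : ∀ n, ∀ z ∈ sphere c |R|, ‖F n z‖ ≤ bound n) (bound_summable : Summable bound)
    (h_lim : ∀ z ∈ sphere c |R|, HasSum (fun n => F n z) (f z)) :
    HasSum (fun n => ∮ z in C(c, R), F n z) (∮ z in C(c, R), f z) := by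
  refine intervalIntegral.hasSum_integral_of_norm_le (fun n => |R| * bound n)
    (fun n => (hF n).out) (fun n θ _ => ?_) (bound_summable.mul_left _)
    (fun θ _ => (h_lim _ (circleMap_mem_sphere' c R θ)).const_smul _)
  rw [norm_smul, deriv_circleMap, norm_mul, norm_circleMap_zero, norm_I, mul_one]
  exact mul_le_mul_of_nonneg_left (h_bound n _ (circleMap_mem_sphere' c R θ)) (abs_nonneg R)

theorem summable_norm_pow_div_pow {A : Type*} [NormedRing A] {L : A} {R : ℝ} (hR : ‖L‖ < R) :
    Summable fun n : ℕ => ‖L ^ n‖ / R ^ n := by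
  have hR₀ : 0 < R := (norm_nonneg L).trans_lt hR
  refine (summable_geometric_of_lt_one (by positivity) ((div_lt_one hR₀).mpr hR))
    |>.of_norm_bounded_eventually_nat ?_
  filter_upwards [eventually_norm_pow_le L] with n hn
  rw [Real.norm_of_nonneg (by positivity), div_pow]
  gcongr

theorem circleIntegral_inv_pow_mul_exp_sub_one_div (c : ℂ) {R : ℝ} (hR : 0 < R) (n : ℕ) :
    ∮ z in C(0, R), z⁻¹ ^ (n + 1) * ((exp (c * z) - 1) / z) =
      2 * π * I * (c ^ (n + 1) / (n + 1).factorial) := by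
  have hcauchy := (Differentiable.differentiableOn (s := closedBall 0 R)
    (f := fun z => exp (c * z) - 1) (by fun_prop)).circleIntegral_one_div_sub_center_pow_smul
    hR (n + 1)
  have hderiv : iteratedDeriv (n + 1) (fun z => exp (c * z) - 1) 0 = c ^ (n + 1) := by
    simp (discharger := fun_prop) [iteratedDeriv_fun_sub, iteratedDeriv_const]
  rw [hderiv] at hcauchy
  convert hcauchy using 1
  · congr 1; funext z; simp only [sub_zero, smul_eq_mul]; field_simp; ring
  · simp only [smul_eq_mul]; ring

section

variable {A : Type*} [NormedRing A] [NormedAlgebra ℂ A] [CompleteSpace A]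

theorem hasSum_inv_pow_smul_resolvent {L : A} {z : ℂ} (hz : ‖L‖ < ‖z‖) :
    HasSum (fun n : ℕ => z⁻¹ ^ (n + 1) • L ^ n) (resolvent L z) := by
  have hz₀ : z ≠ 0 := norm_pos_iff.mp ((norm_nonneg L).trans_lt hz)
  have hsmall : ‖z⁻¹ • L‖ < 1 := by
    rw [norm_smul, norm_inv, inv_mul_lt_one₀ ((norm_nonneg L).trans_lt hz)]
    exact hz
  have hscale : resolvent L z = z⁻¹ • Ring.inverse (1 - z⁻¹ • L) := by
    simpa [resolvent, smul_smul, hz₀, Units.smul_def] using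
      (spectrum.units_smul_resolvent (r := (Units.mk0 z hz₀)⁻¹) (s := (1 : ℂ)) (a := z⁻¹ • L)).symm
  rw [hscale]
  simpa only [smul_pow, smul_smul, ← pow_succ'] using
    (hasSum_geom_series_inverse _ hsmall).const_smul z⁻¹

theorem hasSum_circleIntegral_smul_resolvent {L : A} {R : ℝ} (hR : ‖L‖ < R) {f : ℂ → ℂ}
    (hf : ContinuousOn f (sphere 0 R)) :
    HasSum (fun n : ℕ => (∮ z in C(0, R), z⁻¹ ^ (n + 1) * f z) • L ^ n)
      (∮ z in C(0, R), f z • resolvent L z) := by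
  have hR₀ : 0 < R := (norm_nonneg L).trans_lt hR
  obtain ⟨C, hC⟩ := (isCompact_sphere (0 : ℂ) R).exists_bound_of_continuousOn hf
  simp_rw [← circleIntegral.integral_smul_const]
  refine circleIntegral.hasSum_of_norm_le (fun n => C / R * (‖L ^ n‖ / R ^ n))
    (fun n => ?_) (fun n z hz => ?_) ((summable_norm_pow_div_pow hR).mul_left _)
    (fun z hz => ?_)
  · refine ContinuousOn.circleIntegrable hR₀.le (ContinuousOn.smul ?_ continuousOn_const)
    exact ((continuousOn_inv₀.mono fun z hz => ne_zero_of_mem_sphere hR₀.ne' ⟨z, hz⟩).pow _).mul hf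
  · rw [abs_of_pos hR₀] at hz
    have hzR : ‖z‖ = R := mem_sphere_zero_iff_norm.mp hz
    calc ‖(z⁻¹ ^ (n + 1) * f z) • L ^ n‖ = ‖f z‖ / R * (‖L ^ n‖ / R ^ n) := by
          rw [norm_smul, norm_mul, norm_pow, norm_inv, hzR, inv_pow, pow_succ]; field_simp
      _ ≤ C / R * (‖L ^ n‖ / R ^ n) := by gcongr; exact hC z hz
  · rw [abs_of_pos hR₀] at hz
    have hzR : ‖L‖ < ‖z‖ := (mem_sphere_zero_iff_norm.mp hz).symm ▸ hR
    simpa only [smul_smul, mul_comm (f z)] using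
      (hasSum_inv_pow_smul_resolvent hzR).const_smul (f z)

theorem hasSum_integral_exp_smul (L : A) (T : ℝ) :
    HasSum (fun n : ℕ => ((T : ℂ) ^ (n + 1) / (n + 1).factorial) • L ^ n)
      (∫ t in (0 : ℝ)..T, NormedSpace.exp ((t : ℂ) • L)) := by
  have hterm_integral (n : ℕ) : ∫ t in (0 : ℝ)..T, ((n.factorial : ℂ)⁻¹ • ((t : ℂ) • L) ^ n) =
      ((T : ℂ) ^ (n + 1) / (n + 1).factorial) • L ^ n := by
    simp_rw [smul_pow, smul_smul]
    rw [intervalIntegral.integral_smul_const, intervalIntegral.integral_const_mul]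
    simp_rw [← ofReal_pow]
    rw [intervalIntegral.integral_ofReal, integral_pow]
    push_cast [Nat.factorial_succ]
    rw [zero_pow n.succ_ne_zero, sub_zero]
    field_simp
  simp_rw [← hterm_integral]
  refine intervalIntegral.hasSum_integral_of_norm_le
    (fun n => ‖(n.factorial⁻¹ : ℂ) • ((T : ℂ) • L) ^ n‖) (fun n => ?_) (fun n t ht => ?_)
    (NormedSpace.norm_expSeries_summable' _)
    (fun t _ => NormedSpace.exp_series_hasSum_exp' (𝕂 := ℂ) _)
  · exact (by fun_prop : Continuous fun t : ℝ => _).intervalIntegrable _ _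
  · have ht : |t| ≤ |T| := by simpa using abs_sub_left_of_mem_uIcc (uIoc_subset_uIcc ht)
    simp only [smul_pow, norm_smul, norm_pow, norm_real, Real.norm_eq_abs]
    gcongr

end

theorem integral_exp_eq_circleIntegral_resolvent_general
    {A : Type*} [NormedRing A] [NormedAlgebra ℂ A] [CompleteSpace A]
    (L : A) (T : ℝ) (R : ℝ) (hR : ‖L‖ < R) :
    ∫ t in (0:ℝ)..T, NormedSpace.exp ((t : ℂ) • L) =
      (2 * π * Complex.I)⁻¹ •
        ∮ z in C(0, R),
          (Complex.exp (z * T) * (1 - Complex.exp (-z * T)) / z) •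
            Ring.inverse (algebraMap ℂ A z - L) := by
  have hR₀ : 0 < R := (norm_nonneg L).trans_lt hR
  have hf (z : ℂ) : exp (z * T) * (1 - exp (-z * T)) / z = (exp (T * z) - 1) / z := by
    rw [mul_sub, mul_one, neg_mul, ← exp_add, add_neg_cancel, exp_zero, mul_comm]
  have hcont : ContinuousOn (fun z : ℂ => (exp (T * z) - 1) / z) (sphere 0 R) :=
    (by fun_prop : Continuous fun z : ℂ => exp (T * z) - 1).continuousOn.div continuousOn_id
      fun z hz => ne_zero_of_mem_sphere hR₀.ne' ⟨z, hz⟩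
  have hrhs := (hasSum_circleIntegral_smul_resolvent hR hcont).const_smul (2 * π * I)⁻¹
  simp only [circleIntegral_inv_pow_mul_exp_sub_one_div _ hR₀, smul_smul,
    inv_mul_cancel_left₀ two_pi_I_ne_zero] at hrhs
  simp only [hf]
  exact (hasSum_integral_exp_smul L T).unique hrhs

/-- The time-integrated Koopman semigroup `∫₀ᵀ e^{tL} dt` of a bounded generator `L`
in a complex unital Banach algebra is recovered from the resolvent by the
counterclockwise contour integral
`∫₀ᵀ e^{tL} dt = (2πi)⁻¹ ∮_{|z|=R} e^{zT} (1 - e^{-zT})/z · (z·1 - L)⁻¹ dz`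
over any circle of radius `R > ‖L‖` centered at the origin. -/
theorem integral_exp_eq_circleIntegral_resolvent
    {A : Type*} [NormedRing A] [NormedAlgebra ℂ A] [CompleteSpace A]
    (L : A) (T : ℝ) (hT : 0 < T) (R : ℝ) (hR : ‖L‖ < R) :
    ∫ t in (0:ℝ)..T, NormedSpace.exp ((t : ℂ) • L) =
      (2 * π * Complex.I)⁻¹ •
        ∮ z in C(0, R),
          (Complex.exp (z * T) * (1 - Complex.exp (-z * T)) / z) •
            Ring.inverse (algebraMap ℂ A z - L) :=
  integral_exp_eq_circleIntegral_resolvent_general L T R hR
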